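/- Let σ be an automorphism of F_q of order m, let λ ∈ F_q^* satisfy σ(λ) = λ, let n be a positive integer, and set d = gcd(m, n). If C ⊆ F_q^n is a skew (σ,λ)-constacyclic code, then C is invariant under the d-th power of the λ-constacyclic shift: T_λ^d(c) ∈ C for every c ∈ C (i.e., C is a quasi-twisted code of index d with shift constant λ). -/

import Mathlib

/-!
Write `T_λ` for the `λ`-constacyclic shift and `P` for `σ` applied coordinatewise. Then
`T_{σ,λ} = T_λ ∘ P`, and `P` commutes with `T_λ` because `σ λ = λ`; hence `T_{σ,λ}^m = T_λ^m` and
`C` is `T_λ^m`-invariant. Moreover `T_λ^n = λ • id`. Choosing `k` with `m k ≡ gcd m n [MOD n]`,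
i.e. `m k = gcd m n + n j`, gives `T_λ^{m k} = λ^j • T_λ^{gcd m n}`, and `λ^j` is a unit.
-/

/-- The skew constacyclic shift `T_{σ,λ}` on `F^n`:
`T_{σ,λ}(c)_0 = λ·σ(c_{n−1})` and `T_{σ,λ}(c)_i = σ(c_{i−1})` for `1 ≤ i ≤ n−1`.
(Here `i - 1` is subtraction in `Fin n`, so `0 - 1 = n - 1`.) -/
def skewShift {F : Type*} [Field F] {n : ℕ} [NeZero n] (σ : F → F) (lam : F)
    (c : Fin n → F) : Fin n → F :=
  fun i => if i = 0 then lam * σ (c (i - 1)) else σ (c (i - 1))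

open Set

theorem Submodule.mapsTo_pow_gcd_of_pow_eq_smul_one {R M : Type*} [CommRing R] [AddCommGroup M]
    [Module R M] (C : Submodule R M) {f : Module.End R M} {m n : ℕ} {lam : R} (hlam : IsUnit lam)
    (hn : f ^ n = lam • 1) (hm : MapsTo (f ^ m) C C) : MapsTo (f ^ m.gcd n) C C := by
  obtain rfl | hn0 := n.eq_zero_or_pos
  · simpa using hm
  obtain hlt | heq := (Nat.gcd_le_right m hn0).lt_or_eq
  · obtain ⟨k, -, hk⟩ := Nat.exists_mul_mod_eq_gcd hlt
    obtain ⟨j, hmk⟩ : ∃ j, m * k = m.gcd n + n * j := ⟨_, hk ▸ (Nat.mod_add_div _ _).symm⟩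
    obtain ⟨u, rfl⟩ := hlam
    have hpow : (f ^ m) ^ k = u ^ j • f ^ m.gcd n := by
      rw [← pow_mul, hmk, pow_add, pow_mul, hn, smul_pow, one_pow, mul_smul_one, Units.smul_def,
        Units.val_pow_eq_pow_val]
    intro c hc
    have hkc := hm.iterate k hc
    rw [← Module.End.coe_pow, hpow, LinearMap.smul_apply] at hkc
    exact (C.smul_mem_iff' _).mp hkc
  · rw [heq, hn]
    exact fun c hc ↦ C.smul_mem lam hc

section

variable {F : Type*} [Field F] {n : ℕ} [NeZero n]

theorem skewShift_id_commute_comp {G : Type*} [FunLike G F F] [MulHomClass G F F] {σ : G}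
    {lam : F} (hfix : σ lam = lam) :
    Function.Commute (skewShift id lam) (fun c : Fin n → F ↦ σ ∘ c) := by
  intro c
  funext i
  by_cases hi : i = 0 <;> simp [skewShift, hi, hfix]

theorem skewShift_iterate {G : Type*} [FunLike G F F] [MulHomClass G F F] {σ : G} {lam : F}
    (hfix : σ lam = lam) (k : ℕ) (c : Fin n → F) :
    (skewShift σ lam)^[k] c = (skewShift id lam)^[k] ((⇑σ)^[k] ∘ c) := by
  have hcomp : skewShift σ lam = skewShift id lam ∘ (fun c : Fin n → F ↦ σ ∘ c) := rfl
  have hmap : ∀ d : Fin n → F, (fun c : Fin n → F ↦ σ ∘ c)^[k] d = (⇑σ)^[k] ∘ d := by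
    induction k with
    | zero => exact fun _ ↦ rfl
    | succ k ih => intro d; rw [Function.iterate_succ_apply', ih, Function.iterate_succ']; rfl
  rw [hcomp, (skewShift_id_commute_comp hfix).comp_iterate, Function.comp_apply, hmap]

open Fin.NatCast in
theorem skewShift_id_iterate_apply (lam : F) {k : ℕ} (hk : k ≤ n) (c : Fin n → F) (i : Fin n) :
    (skewShift id lam)^[k] c i = (if (i : ℕ) < k then lam else 1) * c (i - k) := by
  obtain ⟨n, rfl⟩ := Nat.exists_eq_succ_of_ne_zero (NeZero.ne n)
  induction k generalizing i with
  | zero => simp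
  | succ k ih =>
    have hsub : i - 1 - k = i - (k + 1 : ℕ) := by rw [sub_sub, Nat.cast_succ, add_comm]
    rw [Function.iterate_succ_apply', skewShift, ih (by omega), id, hsub]
    by_cases hi : i = 0
    · simp [hi, show ¬ n < k by omega]
    · have hlt : ((i - 1 : Fin (n + 1)) : ℕ) < k ↔ (i : ℕ) < k + 1 := by
        rw [Fin.coe_sub_one, if_neg hi]
        have := Fin.val_ne_zero_iff.mpr hi
        omega
      simp [hi, hlt]

def constacyclicShift (lam : F) : Module.End F (Fin n → F) where
  toFun := skewShift id lam
  map_add' c d := by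
    funext i
    by_cases hi : i = 0 <;> simp [skewShift, hi, mul_add]
  map_smul' a c := by
    funext i
    by_cases hi : i = 0 <;> simp [skewShift, hi, mul_left_comm]

theorem coe_constacyclicShift (lam : F) :
    ⇑(constacyclicShift (n := n) lam) = skewShift id lam :=
  rfl

theorem constacyclicShift_pow_self (lam : F) : constacyclicShift (n := n) lam ^ n = lam • 1 := by
  ext c i
  simp [Module.End.pow_apply, coe_constacyclicShift, skewShift_id_iterate_apply lam le_rfl]

end

theorem stmt_7_general (F : Type*) [Field F]
    (σ : F ≃+* F) (m : ℕ) (hm : orderOf σ = m)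
    (lam : F) (hlam : lam ≠ 0) (hfix : σ lam = lam)
    (n : ℕ) [NeZero n]
    (C : Submodule F (Fin n → F))
    (hC : ∀ c ∈ C, skewShift (⇑σ) lam c ∈ C) :
    ∀ c ∈ C, (skewShift (id : F → F) lam)^[Nat.gcd m n] c ∈ C := by
  have hσm : (⇑σ)^[m] = id := by rw [← RingAut.coe_pow, ← hm, pow_orderOf_eq_one]; rfl
  have hCm : MapsTo (constacyclicShift lam ^ m) (C : Set (Fin n → F)) C := by
    rw [Module.End.coe_pow, coe_constacyclicShift]
    intro c hc
    have hTm := MapsTo.iterate (fun c hc ↦ hC c hc) m hc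
    rwa [skewShift_iterate hfix, hσm, Function.id_comp] at hTm
  intro c hc
  simpa [Module.End.coe_pow, coe_constacyclicShift] using
    C.mapsTo_pow_gcd_of_pow_eq_smul_one hlam.isUnit (constacyclicShift_pow_self lam) hCm hc

/-- Let `σ` be an automorphism of `F_q` of order `m`, let `λ ∈ F_q^*`
with `σ(λ) = λ`, let `n` be a positive integer, and `d = gcd(m, n)`.
If `C ⊆ F_q^n` is a skew `(σ,λ)`-constacyclic code, then `C` is invariant under
the `d`-th power of the `λ`-constacyclic shift: `T_λ^[d](c) ∈ C` for all `c ∈ C`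
(i.e. `C` is a quasi-twisted code of index `d` with shift constant `λ`). -/
theorem stmt_7 (F : Type*) [Field F] [Fintype F]
    (σ : F ≃+* F) (m : ℕ) (hm : orderOf σ = m)
    (lam : F) (hlam : lam ≠ 0) (hfix : σ lam = lam)
    (n : ℕ) [NeZero n]
    (C : Submodule F (Fin n → F))
    (hC : ∀ c ∈ C, skewShift (⇑σ) lam c ∈ C) :
    ∀ c ∈ C, (skewShift (id : F → F) lam)^[Nat.gcd m n] c ∈ C :=
  stmt_7_general F σ m hm lam hlam hfix n C hC
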